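/- arXiv:2501.09679 — 2 statements merged into one kernel-verified Lean document; each statement's English description precedes it below -/
import Mathlib

section
/- Let σ, c ∈ (0,∞). There exist constants C ≥ 1 and c_* > 0, depending only on c and σ, with the following property: for every real N ≥ 1 there exist a time T with 0 < T ≤ C/N and jointly smooth functions u : [0,T]×ℝ² → ℝ², E, B : [0,T]×ℝ² → ℝ³, p : [0,T]×ℝ² → ℝ, all 2π-periodic in each of the two spatial variables (i.e. defined on the torus 𝕋² = (ℝ/2πℤ)²), such that: (i) (u, E, B, p) solves the incompressible Euler–Maxwell system (EM) pointwise on [0,T]×𝕋² with current density j = σ(cE + U×B); (ii) the horizontal part of the initial magnetic field is not identically zero, i.e. B(0,·)·e₁ ≢ 0 or B(0,·)·e₂ ≢ 0; (iii) sup_{x} |ω(0,x)| ≤ C/N; and (iv) sup_{x} |ω(T,x)| ≥ c_*, where ω := ∂₁u₂ − ∂₂u₁ is the vorticity. In other words, the Euler–Maxwell system on the two-dimensional torus is mildly ill-posed in the Yudovich class L^∞ of vorticities when the magnetic field does not obey the Normal Structure. -/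
/-- Time partial derivative of a scalar function on `ℝ × ℝ²` (time × space). -/
noncomputable def dt (f : ℝ × (ℝ × ℝ) → ℝ) (z : ℝ × (ℝ × ℝ)) : ℝ := fderiv ℝ f z (1, 0, 0)

/-- First spatial partial derivative. -/
noncomputable def dx1 (f : ℝ × (ℝ × ℝ) → ℝ) (z : ℝ × (ℝ × ℝ)) : ℝ := fderiv ℝ f z (0, 1, 0)

/-- Second spatial partial derivative. -/
noncomputable def dx2 (f : ℝ × (ℝ × ℝ) → ℝ) (z : ℝ × (ℝ × ℝ)) : ℝ := fderiv ℝ f z (0, 0, 1)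

/-- The standard cross product on `ℝ³`. -/
def cross (a b : Fin 3 → ℝ) : Fin 3 → ℝ :=
  ![a 1 * b 2 - a 2 * b 1, a 2 * b 0 - a 0 * b 2, a 0 * b 1 - a 1 * b 0]

/-- `f` is `2π`-periodic in each of the two spatial variables, i.e. it is a function on
`ℝ × 𝕋²` with `𝕋² = (ℝ/2πℤ)²`. -/
def SpacePeriodic (f : ℝ × (ℝ × ℝ) → ℝ) : Prop :=
  ∀ t x1 x2 : ℝ,
    f (t, (x1 + 2 * Real.pi, x2)) = f (t, (x1, x2)) ∧
    f (t, (x1, x2 + 2 * Real.pi)) = f (t, (x1, x2))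

/-- `(u, E, B, p)` solves the incompressible Euler--Maxwell system (EM) pointwise on
`[0,T] × ℝ²`, with conductivity `σ`, speed of light `c`, current density
`j = σ(cE + U×B)` where `U = (u₁, u₂, 0)`, and curl of a field `F` of two space variables
given by `∇×F = (∂₂F₃, -∂₁F₃, ∂₁F₂ - ∂₂F₁)`:
Euler's equation `∂ₜu + (u·∇)u = -∇p + ((j×B)₁, (j×B)₂)`, `div u = 0`;
Ampère's equation `(1/c)∂ₜE - ∇×B = -j`;
Faraday's equation `(1/c)∂ₜB + ∇×E = 0`, `div B = 0`. -/
def SolvesEM (σ c T : ℝ) (u1 u2 E1 E2 E3 B1 B2 B3 p : ℝ × (ℝ × ℝ) → ℝ) : Prop :=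
  ∀ t ∈ Set.Icc (0 : ℝ) T, ∀ x : ℝ × ℝ,
    let z : ℝ × (ℝ × ℝ) := (t, x)
    let Bv : Fin 3 → ℝ := ![B1 z, B2 z, B3 z]
    let j : Fin 3 → ℝ := fun i =>
      σ * (c * (![E1 z, E2 z, E3 z] i) + cross ![u1 z, u2 z, 0] Bv i)
    (dt u1 z + u1 z * dx1 u1 z + u2 z * dx2 u1 z = -dx1 p z + cross j Bv 0) ∧
    (dt u2 z + u1 z * dx1 u2 z + u2 z * dx2 u2 z = -dx2 p z + cross j Bv 1) ∧
    (dx1 u1 z + dx2 u2 z = 0) ∧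
    ((1 / c) * dt E1 z - dx2 B3 z = -(j 0)) ∧
    ((1 / c) * dt E2 z - (-(dx1 B3 z)) = -(j 1)) ∧
    ((1 / c) * dt E3 z - (dx1 B2 z - dx2 B1 z) = -(j 2)) ∧
    ((1 / c) * dt B1 z + dx2 E3 z = 0) ∧
    ((1 / c) * dt B2 z + (-(dx1 E3 z)) = 0) ∧
    ((1 / c) * dt B3 z + (dx1 E2 z - dx2 E1 z) = 0) ∧
    (dx1 B1 z + dx2 B2 z = 0)

lemma sep_all (f g : ℝ → ℝ) (f' g' : ℝ) (t x1 x2 : ℝ)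
    (hf : HasDerivAt f f' t) (hg : HasDerivAt g g' x1) :
    dt (fun z : ℝ × (ℝ × ℝ) => f z.1 * g z.2.1) (t, (x1, x2)) = f' * g x1 ∧
    dx1 (fun z : ℝ × (ℝ × ℝ) => f z.1 * g z.2.1) (t, (x1, x2)) = f t * g' ∧
    dx2 (fun z : ℝ × (ℝ × ℝ) => f z.1 * g z.2.1) (t, (x1, x2)) = 0 := by
  have hF : HasFDerivAt (fun z : ℝ × (ℝ × ℝ) => f z.1)
      ((ContinuousLinearMap.smulRight (1 : ℝ →L[ℝ] ℝ) f').comp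
        (ContinuousLinearMap.fst ℝ ℝ (ℝ × ℝ))) (t, (x1, x2)) :=
    hf.hasFDerivAt.comp _ hasFDerivAt_fst
  have hG : HasFDerivAt (fun z : ℝ × (ℝ × ℝ) => g z.2.1)
      ((ContinuousLinearMap.smulRight (1 : ℝ →L[ℝ] ℝ) g').comp
        ((ContinuousLinearMap.fst ℝ ℝ ℝ).comp (ContinuousLinearMap.snd ℝ ℝ (ℝ × ℝ)))) (t, (x1, x2)) :=
    hg.hasFDerivAt.comp _ (hasFDerivAt_fst.comp _ hasFDerivAt_snd)
  have hfd := (hF.fun_mul hG).fderiv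
  unfold dt dx1 dx2
  rw [hfd]
  exact ⟨by simp [mul_comm], by simp, by simp⟩

lemma const_all (a : ℝ) (z : ℝ × (ℝ × ℝ)) :
    dt (fun _ => a) z = 0 ∧ dx1 (fun _ => a) z = 0 ∧ dx2 (fun _ => a) z = 0 := by
  refine ⟨?_, ?_, ?_⟩ <;> simp [dt, dx1, dx2]

lemma gderiv (α μ X Y : ℝ) (t : ℝ) :
    HasDerivAt (fun t : ℝ => Real.exp (α*t) * (X * Real.cos (μ*t) + Y * Real.sin (μ*t)))
      (Real.exp (α*t) * ((α*X + μ*Y) * Real.cos (μ*t) + (α*Y - μ*X) * Real.sin (μ*t))) t := by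
  have hα : HasDerivAt (fun t : ℝ => α*t) α t := by simpa using (hasDerivAt_id t).const_mul α
  have hμ : HasDerivAt (fun t : ℝ => μ*t) μ t := by simpa using (hasDerivAt_id t).const_mul μ
  have h := (hα.exp).fun_mul (((hμ.cos).const_mul X).fun_add ((hμ.sin).const_mul Y))
  refine h.congr_deriv ?_
  ring

lemma gsmooth (α μ X Y : ℝ) :
    ContDiff ℝ (⊤ : ℕ∞) (fun t : ℝ => Real.exp (α*t) * (X * Real.cos (μ*t) + Y * Real.sin (μ*t))) := by
  have h1 : ContDiff ℝ (⊤ : ℕ∞) (fun t : ℝ => α * t) := contDiff_const.mul contDiff_id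
  have h2 : ContDiff ℝ (⊤ : ℕ∞) (fun t : ℝ => μ * t) := contDiff_const.mul contDiff_id
  exact (Real.contDiff_exp.comp h1).mul
    ((contDiff_const.mul (Real.contDiff_cos.comp h2)).add (contDiff_const.mul (Real.contDiff_sin.comp h2)))

lemma mode (σ c β μ N : ℝ) (hβ2 : β^2*(1+σ^2*c^2) = c^2) (hμ2 : μ^2 = β^2 - σ^2*β^4/4) :
    ∃ fe fb fv : ℝ → ℝ,
      ContDiff ℝ (⊤ : ℕ∞) fe ∧ ContDiff ℝ (⊤ : ℕ∞) fb ∧ ContDiff ℝ (⊤ : ℕ∞) fv ∧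
      (∀ t, HasDerivAt fe (c * fb t - σ*c^2 * fe t + σ*c*β * fv t) t) ∧
      (∀ t, HasDerivAt fb (-(c * fe t)) t) ∧
      (∀ t, HasDerivAt fv (σ*β*c * fe t - σ*β^2 * fv t) t) ∧
      (∀ t, fv t = Real.exp (-(σ*β^2)/2 * t) *
        (-(c*N*((-(σ*β) + σ^3*β^3/2)^2 + (σ^2*β*μ)^2)) * Real.sin (μ*t))) := by
  set α : ℝ := -(σ*β^2)/2 with hA
  set P : ℝ := -(σ*β) + σ^3*β^3/2 with hP
  set Q : ℝ := -(σ^2*β*μ) with hQ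
  set ec : ℝ := -(N*(Q*α - P*μ)) with hec
  set es : ℝ := N*(Q*μ + P*α) with hes
  set bc : ℝ := c*N*Q with hbc
  set bs : ℝ := -(c*N*P) with hbs
  set vs : ℝ := -(c*N*(P^2+Q^2)) with hvs
  have idI : α*ec + μ*es = c*bc - σ*c^2*ec := by
    simp only [hec, hes, hbc, hP, hQ, hA]
    linear_combination (-(σ^2*β*μ*N)) * hμ2
  have idII : α*es - μ*ec = c*bs - σ*c^2*es + σ*c*β*vs := by
    simp only [hec, hes, hbs, hvs, hP, hQ, hA]
    linear_combination (σ*β*N + σ^3*β^3*N/2 - σ^3*c^2*β*N + σ^5*c^2*β^3*N) * hμ2 + (σ*β*N) * hβ2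
  have idIII : α*bc + μ*bs = -(c*ec) := by
    simp only [hec, hbc, hbs, hP, hQ, hA]; ring
  have idIV : α*bs - μ*bc = -(c*es) := by
    simp only [hes, hbc, hbs, hP, hQ, hA]; ring
  have idV : α*0 + μ*vs = σ*β*c*ec - σ*β^2*0 := by
    simp only [hec, hvs, hP, hQ, hA]
    linear_combination (-(σ^4*c*β^2*μ*N)) * hμ2
  have idVI : α*vs - μ*0 = σ*β*c*es - σ*β^2*vs := by
    simp only [hes, hvs, hP, hQ, hA]
    linear_combination (σ^3*c*β^2*N - σ^5*c*β^4*N/2) * hμ2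
  refine ⟨fun t => Real.exp (α*t) * (ec * Real.cos (μ*t) + es * Real.sin (μ*t)),
          fun t => Real.exp (α*t) * (bc * Real.cos (μ*t) + bs * Real.sin (μ*t)),
          fun t => Real.exp (α*t) * ((0:ℝ) * Real.cos (μ*t) + vs * Real.sin (μ*t)),
          gsmooth _ _ _ _, gsmooth _ _ _ _, gsmooth _ _ _ _, ?_, ?_, ?_, ?_⟩
  · intro t
    have h := gderiv α μ ec es t
    convert h using 1
    linear_combination (-(Real.exp (α*t) * Real.cos (μ*t))) * idI + (-(Real.exp (α*t) * Real.sin (μ*t))) * idII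
  · intro t
    have h := gderiv α μ bc bs t
    convert h using 1
    linear_combination (Real.exp (α*t) * Real.cos (μ*t)) * idIII + (Real.exp (α*t) * Real.sin (μ*t)) * idIV
  · intro t
    have h := gderiv α μ 0 vs t
    convert h using 1
    linear_combination (-(Real.exp (α*t) * Real.cos (μ*t))) * idV + (-(Real.exp (α*t) * Real.sin (μ*t))) * idVI
  · intro t
    simp only [hvs, hP, hQ, hA]
    ring


set_option maxHeartbeats 2000000 in
/-- Mild ill-posedness of the incompressible Euler--Maxwell system on the two-dimensional
torus `𝕋² = (ℝ/2πℤ)²` in the Yudovich class when the magnetic field does not obey the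
Normal Structure: there are constants `C ≥ 1`, `c_* > 0` (depending only on `c`, `σ`) such
that for every `N ≥ 1` there exist a time `0 < T ≤ C/N` and a smooth, spatially `2π`-periodic
solution `(u, E, B, p)` whose initial magnetic field has nontrivial horizontal part, whose
initial vorticity is `≤ C/N` in `L^∞`, but whose vorticity at time `T` has `L^∞` norm at
least `c_*`. -/
theorem stmt_1 (σ c : ℝ) (hσ : 0 < σ) (hc : 0 < c) :
    ∃ C cstar : ℝ, 1 ≤ C ∧ 0 < cstar ∧
      ∀ N : ℝ, 1 ≤ N →
        ∃ (T : ℝ) (u1 u2 E1 E2 E3 B1 B2 B3 p : ℝ × (ℝ × ℝ) → ℝ),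
          0 < T ∧ T ≤ C / N ∧
          ContDiff ℝ (⊤ : ℕ∞) u1 ∧ ContDiff ℝ (⊤ : ℕ∞) u2 ∧ ContDiff ℝ (⊤ : ℕ∞) E1 ∧ ContDiff ℝ (⊤ : ℕ∞) E2 ∧
          ContDiff ℝ (⊤ : ℕ∞) E3 ∧ ContDiff ℝ (⊤ : ℕ∞) B1 ∧ ContDiff ℝ (⊤ : ℕ∞) B2 ∧ ContDiff ℝ (⊤ : ℕ∞) B3 ∧
          ContDiff ℝ (⊤ : ℕ∞) p ∧
          SpacePeriodic u1 ∧ SpacePeriodic u2 ∧ SpacePeriodic E1 ∧ SpacePeriodic E2 ∧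
          SpacePeriodic E3 ∧ SpacePeriodic B1 ∧ SpacePeriodic B2 ∧ SpacePeriodic B3 ∧
          SpacePeriodic p ∧
          SolvesEM σ c T u1 u2 E1 E2 E3 B1 B2 B3 p ∧
          ((∃ x : ℝ × ℝ, B1 (0, x) ≠ 0) ∨ (∃ x : ℝ × ℝ, B2 (0, x) ≠ 0)) ∧
          (∀ x : ℝ × ℝ, |dx1 u2 (0, x) - dx2 u1 (0, x)| ≤ C / N) ∧
          (∃ x : ℝ × ℝ, cstar ≤ |dx1 u2 (T, x) - dx2 u1 (T, x)|) := by
  have hS : (0:ℝ) < 1 + σ^2*c^2 := by positivity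
  obtain ⟨β, hβpos, hβ2⟩ : ∃ β : ℝ, 0 < β ∧ β^2*(1+σ^2*c^2) = c^2 := by
    refine ⟨c / Real.sqrt (1+σ^2*c^2), by positivity, ?_⟩
    rw [div_pow, Real.sq_sqrt hS.le]
    field_simp
  have hσβ : σ^2*β^2 < 1 := by nlinarith [sq_nonneg (σ*c), sq_nonneg β]
  have hβsq : 0 < β^2 := by positivity
  have hrad : 0 < β^2 - σ^2*β^4/4 := by nlinarith
  obtain ⟨μ, hμpos, hμ2⟩ : ∃ μ : ℝ, 0 < μ ∧ μ^2 = β^2 - σ^2*β^4/4 :=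
    ⟨Real.sqrt (β^2 - σ^2*β^4/4), Real.sqrt_pos.2 hrad, Real.sq_sqrt hrad.le⟩
  obtain ⟨K, hKdef⟩ : ∃ K : ℝ, K = (-(σ*β) + σ^3*β^3/2)^2 + (σ^2*β*μ)^2 := ⟨_, rfl⟩
  have hKpos : 0 < K := by
    have h1 : 0 < (σ^2*β*μ)^2 := by positivity
    rw [hKdef]
    nlinarith [sq_nonneg (-(σ*β) + σ^3*β^3/2)]
  obtain ⟨cstar, hcstar⟩ : ∃ x : ℝ, x = Real.exp (-(σ*β^2)/2) * (c * K * μ / (2*(1+μ))) := ⟨_, rfl⟩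
  have hcstarpos : 0 < cstar := by
    rw [hcstar]
    exact mul_pos (Real.exp_pos _)
      (div_pos (mul_pos (mul_pos hc hKpos) hμpos) (by positivity))
  refine ⟨1, cstar, le_refl 1, hcstarpos, ?_⟩
  intro N hN
  have hNpos : 0 < N := lt_of_lt_of_le one_pos hN
  obtain ⟨fe, fb, fv, hsfe, hsfb, hsfv, hode_e, hode_b, hode_v, hfv_eq⟩ :=
    mode σ c β μ N hβ2 hμ2
  obtain ⟨T, hT⟩ : ∃ T : ℝ, T = 1/((1+μ)*N) := ⟨_, rfl⟩
  have hTpos : 0 < T := by rw [hT]; positivity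
  have hTle : T ≤ 1/N := by
    rw [hT]
    apply one_div_le_one_div_of_le hNpos
    nlinarith
  have hN0 : N ≠ 0 := hNpos.ne'
  have hy0 : 0 < μ*T := by rw [hT]; positivity
  have hy1 : μ*T ≤ 1 := by
    rw [hT, mul_one_div, div_le_one (by positivity)]
    nlinarith
  have hcube : (μ*T)^3 ≤ μ*T := by
    nlinarith [mul_nonneg (mul_nonneg hy0.le hy0.le) (sub_nonneg.mpr hy1),
      mul_nonneg hy0.le (sub_nonneg.mpr hy1)]
  have hsiny : μ*T/2 ≤ Real.sin (μ*T) := by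
    have h := Real.sin_gt_sub_cube hy0
    linarith
  have hsin0 : 0 ≤ Real.sin (μ*T) := le_trans (by positivity) hsiny
  have hT1 : T ≤ 1 := by
    rw [hT, div_le_one (by positivity)]
    nlinarith
  have hexp : Real.exp (-(σ*β^2)/2) ≤ Real.exp (-(σ*β^2)/2*T) := by
    apply Real.exp_le_exp.mpr
    nlinarith [mul_nonneg (mul_nonneg hσ.le (sq_nonneg β)) (sub_nonneg.mpr hT1)]
  have hkey : cstar = Real.exp (-(σ*β^2)/2) * (c*N*K*(μ*T/2)) := by
    rw [hcstar, hT]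
    field_simp
  -- fields
  refine ⟨T,
    (fun _ => (0:ℝ)),
    (fun z => fv z.1 * Real.cos z.2.1),
    (fun _ => (0:ℝ)), (fun _ => (0:ℝ)),
    (fun z => fe z.1 * Real.cos z.2.1),
    (fun _ => β),
    (fun z => fb z.1 * Real.sin z.2.1),
    (fun _ => (0:ℝ)),
    (fun z => (-σ/2*((c*fe z.1 - β*fv z.1)*fb z.1)) * Real.sin z.2.1 ^ 2),
    hTpos, by simpa using hTle, ?_, ?_, ?_, ?_, ?_, ?_, ?_, ?_, ?_,
    ?_, ?_, ?_, ?_, ?_, ?_, ?_, ?_, ?_, ?_, ?_, ?_, ?_⟩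
  · exact contDiff_const
  · exact (hsfv.comp contDiff_fst).mul (Real.contDiff_cos.comp (contDiff_fst.comp contDiff_snd))
  · exact contDiff_const
  · exact contDiff_const
  · exact (hsfe.comp contDiff_fst).mul (Real.contDiff_cos.comp (contDiff_fst.comp contDiff_snd))
  · exact contDiff_const
  · exact (hsfb.comp contDiff_fst).mul (Real.contDiff_sin.comp (contDiff_fst.comp contDiff_snd))
  · exact contDiff_const
  · refine ContDiff.mul ?_ ((Real.contDiff_sin.comp (contDiff_fst.comp contDiff_snd)).pow 2)
    have hpf : ContDiff ℝ (⊤ : ℕ∞) (fun t : ℝ => -σ/2*((c*fe t - β*fv t)*fb t)) :=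
      contDiff_const.mul (((contDiff_const.mul hsfe).sub (contDiff_const.mul hsfv)).mul hsfb)
    exact hpf.comp contDiff_fst
  · intro t x1 x2; exact ⟨rfl, rfl⟩
  · intro t x1 x2; simp [Real.cos_add_two_pi]
  · intro t x1 x2; exact ⟨rfl, rfl⟩
  · intro t x1 x2; exact ⟨rfl, rfl⟩
  · intro t x1 x2; simp [Real.cos_add_two_pi]
  · intro t x1 x2; exact ⟨rfl, rfl⟩
  · intro t x1 x2; simp [Real.sin_add_two_pi]
  · intro t x1 x2; exact ⟨rfl, rfl⟩
  · intro t x1 x2; simp [Real.sin_add_two_pi]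
  · -- SolvesEM
    intro t ht x
    obtain ⟨x1, x2⟩ := x
    have hcos := Real.hasDerivAt_cos x1
    have hsin := Real.hasDerivAt_sin x1
    have hsq : HasDerivAt (fun y : ℝ => Real.sin y ^ 2) (2 * Real.sin x1 * Real.cos x1) x1 := by
      simpa [mul_comm] using (Real.hasDerivAt_sin x1).fun_pow 2
    have hu2 := sep_all fv Real.cos (σ*β*c * fe t - σ*β^2 * fv t) (-Real.sin x1) t x1 x2 (hode_v t) hcos
    have hE3 := sep_all fe Real.cos (c * fb t - σ*c^2 * fe t + σ*c*β * fv t) (-Real.sin x1) t x1 x2 (hode_e t) hcos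
    have hB2 := sep_all fb Real.sin (-(c * fe t)) (Real.cos x1) t x1 x2 (hode_b t) hsin
    have hpf : HasDerivAt (fun t : ℝ => -σ/2*((c*fe t - β*fv t)*fb t))
        (-σ/2*(((c*(c * fb t - σ*c^2 * fe t + σ*c*β * fv t) - β*(σ*β*c * fe t - σ*β^2 * fv t))*fb t)
          + (c*fe t - β*fv t)*(-(c * fe t)))) t :=
      ((((hode_e t).const_mul c).sub ((hode_v t).const_mul β)).mul (hode_b t)).const_mul (-σ/2)
    have hp := sep_all (fun t : ℝ => -σ/2*((c*fe t - β*fv t)*fb t)) (fun y : ℝ => Real.sin y ^ 2)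
      _ (2 * Real.sin x1 * Real.cos x1) t x1 x2 hpf hsq
    have hc0 := const_all 0 (t, (x1, x2))
    have hcβ := const_all β (t, (x1, x2))
    refine ⟨?_, ?_, ?_, ?_, ?_, ?_, ?_, ?_, ?_, ?_⟩ <;>
      simp only [cross, Matrix.cons_val_zero, Matrix.cons_val_one, Matrix.head_cons,
        Matrix.cons_val_two, Matrix.tail_cons,
        hu2.1, hu2.2.1, hu2.2.2, hE3.1, hE3.2.1, hE3.2.2, hB2.1, hB2.2.1, hB2.2.2,
        hp.1, hp.2.1, hp.2.2, hc0.1, hc0.2.1, hc0.2.2, hcβ.1, hcβ.2.1, hcβ.2.2] <;>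
      field_simp <;> ring
  · exact Or.inl ⟨(0, 0), hβpos.ne'⟩
  · -- initial vorticity
    intro x
    obtain ⟨x1, x2⟩ := x
    have hcos := Real.hasDerivAt_cos x1
    have hu2 := sep_all fv Real.cos (σ*β*c * fe 0 - σ*β^2 * fv 0) (-Real.sin x1) 0 x1 x2 (hode_v 0) hcos
    have hfv0 : fv 0 = 0 := by rw [hfv_eq 0]; simp
    have hu1 := const_all 0 ((0:ℝ), (x1, x2))
    rw [hu2.2.1, hu1.2.2, hfv0]
    simp only [zero_mul, zero_sub, sub_zero, abs_zero, neg_zero]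
    positivity
  · -- final vorticity
    refine ⟨(Real.pi/2, 0), ?_⟩
    have hcos := Real.hasDerivAt_cos (Real.pi/2)
    have hu2 := sep_all fv Real.cos (σ*β*c * fe T - σ*β^2 * fv T) (-Real.sin (Real.pi/2)) T (Real.pi/2) 0 (hode_v T) hcos
    have hu1 := const_all 0 (T, (Real.pi/2, (0:ℝ)))
    rw [hu2.2.1, hu1.2.2, Real.sin_pi_div_two]
    have hfvT : fv T = -(Real.exp (-(σ*β^2)/2*T) * (c*N*K*Real.sin (μ*T))) := by
      rw [hfv_eq T, hKdef]; ring
    rw [hfvT]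
    rw [sub_zero, mul_neg_one, neg_neg, abs_of_nonneg]
    · rw [hkey]
      calc Real.exp (-(σ*β^2)/2) * (c*N*K*(μ*T/2))
          ≤ Real.exp (-(σ*β^2)/2) * (c*N*K*Real.sin (μ*T)) := by
            apply mul_le_mul_of_nonneg_left _ (Real.exp_pos _).le
            apply mul_le_mul_of_nonneg_left hsiny
            exact mul_nonneg (mul_nonneg hc.le hNpos.le) hKpos.le
        _ ≤ Real.exp (-(σ*β^2)/2*T) * (c*N*K*Real.sin (μ*T)) := by
            apply mul_le_mul_of_nonneg_right hexp
            exact mul_nonneg (mul_nonneg (mul_nonneg hc.le hNpos.le) hKpos.le) hsin0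
    · exact mul_nonneg (Real.exp_pos _).le
        (mul_nonneg (mul_nonneg (mul_nonneg hc.le hNpos.le) hKpos.le) hsin0)
end

section
/- Let a > 0, f₀ > 0 and T > 0, and let f : [0,T] → [0,∞) be continuous and satisfy f(t) ≤ 2f₀ + a·t·f(t) + a·t·f(t)² for every t ∈ [0,T]. If T ≤ 1/(4a) and T·f₀ < 1/(16a), then f(t) ≤ 4f₀ for every t ∈ [0,T]. -/
/-- The abstract continuity (bootstrap) argument used to close the a priori estimate
in the local well-posedness proof: if a continuous nonnegative function `f` satisfies
`f t ≤ 2 f₀ + a t f t + a t (f t)²` on `[0, T]`, with `T ≤ 1/(4a)` and `T f₀ < 1/(16a)`,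
then `f t ≤ 4 f₀` on `[0, T]`. -/
theorem stmt_12 (a f0 T : ℝ) (ha : 0 < a) (hf0 : 0 < f0) (hT : 0 < T)
    (f : ℝ → ℝ) (hcont : ContinuousOn f (Set.Icc 0 T))
    (hnonneg : ∀ t ∈ Set.Icc (0 : ℝ) T, 0 ≤ f t)
    (hineq : ∀ t ∈ Set.Icc (0 : ℝ) T, f t ≤ 2 * f0 + a * t * f t + a * t * (f t) ^ 2)
    (hT1 : T ≤ 1 / (4 * a)) (hT2 : T * f0 < 1 / (16 * a)) :
    ∀ t ∈ Set.Icc (0 : ℝ) T, f t ≤ 4 * f0 := by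
  have haT : a * T ≤ 1 / 4 := by
    rw [le_div_iff₀ (by positivity)] at hT1
    nlinarith
  have haT2 : a * (T * f0) < 1 / 16 := by
    rw [lt_div_iff₀ (by positivity)] at hT2
    nlinarith
  -- f never equals 4 * f0 on [0,T]
  have hne : ∀ s ∈ Set.Icc (0 : ℝ) T, f s ≠ 4 * f0 := by
    intro s hs habs
    have h1 := hineq s hs
    obtain ⟨hs0, hsT⟩ := hs
    rw [habs] at h1
    have hsub : 0 ≤ T - s := by linarith
    have h2 : a * s * (4 * f0) ≤ a * T * (4 * f0) := by
      nlinarith [mul_nonneg (mul_nonneg ha.le hsub) hf0.le]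
    have h3 : a * s * (4 * f0) ^ 2 ≤ a * T * (4 * f0) ^ 2 := by
      nlinarith [mul_nonneg (mul_nonneg ha.le hsub) (sq_nonneg f0)]
    nlinarith
  have h0 : f 0 < 4 * f0 := by
    have := hineq 0 ⟨le_refl 0, le_of_lt hT⟩
    have hlt : f 0 ≤ 2 * f0 := by nlinarith
    linarith
  intro t ht
  by_contra h
  push_neg at h
  have hsub : Set.Icc (0 : ℝ) t ⊆ Set.Icc 0 T := Set.Icc_subset_Icc le_rfl ht.2
  have hivt := intermediate_value_Icc ht.1 (hcont.mono hsub)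
  have : (4 * f0) ∈ Set.Icc (f 0) (f t) := ⟨le_of_lt h0, le_of_lt h⟩
  obtain ⟨s, hs, hfs⟩ := hivt this
  exact hne s (hsub hs) hfs
end
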